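/- Let M be a matroid with weights w': U → ℝ_{≥0}, and for each independent set S let R(S) be the maximum-weight basis of the contraction M/S, with f(S) = w'(R(S)). Then for any independent set J of M, the function f is submodular on subsets of J: for all S ⊆ J and x, y ∈ J \ S with S ∪ {x,y} independent, f(S) - f(S ∪ {x}) ≤ f(S ∪ {y}) - f(S ∪ {x,y}). -/

import Mathlib

/-!
Write `W X` for the weight of `X`. Then `f P = W (P ∪ R P) - W P`, where `W (P ∪ R P)` is the
largest weight of a base containing `P`. As `W` is modular, it suffices to compare these maxima.
Take optimal bases `A ⊇ S` and `B ⊇ S ∪ {x, y}`. If `y ∈ A`, then `B ⊇ S ∪ {x}` and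
`A ⊇ S ∪ {y}` already. Otherwise symmetric exchange gives `e ∈ A \ B` such that `B - y + e` and
`A - e + y` are bases; they contain `S ∪ {x}` and `S ∪ {y}`, and their total weight is
`W A + W B`.
-/

open Set

lemma finsum_mem_insert_sdiff_singleton_add {α M : Type*} [AddCommMonoid M] (f : α → M)
    {s : Set α} {a b : α} (hs : s.Finite) (ha : a ∉ s) (hb : b ∈ insert a s) :
    ∑ᶠ i ∈ insert a s \ {b}, f i + f b = f a + ∑ᶠ i ∈ s, f i := by
  rw [add_comm, ← finsum_mem_singleton (f := f) (a := b),
    finsum_mem_add_sdiff (singleton_subset_iff.2 hb) (hs.insert a), finsum_mem_insert f ha hs]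

lemma finsum_mem_union_singleton_add_union_singleton {α M : Type*} [AddCommMonoid M]
    (f : α → M) {s : Set α} {a b : α} (hs : s.Finite) (hab : a ≠ b) :
    ∑ᶠ i ∈ s ∪ {a}, f i + ∑ᶠ i ∈ s ∪ {b}, f i = ∑ᶠ i ∈ s ∪ {a, b}, f i + ∑ᶠ i ∈ s, f i := by
  rw [← finsum_mem_union_inter (hs.union (finite_singleton a)) (hs.union (finite_singleton b)),
    ← union_union_distrib_left, ← union_inter_distrib_left, singleton_union,
    singleton_inter_eq_empty.2 (mt mem_singleton_iff.1 hab), union_empty]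

namespace Matroid

variable {α : Type*} {M : Matroid α} {A B : Set α} {y : α}

/-- The element `e` is a second element of the intersection of the fundamental circuit of `y`
with respect to `A` and the fundamental cocircuit of `y` with respect to `B`. -/
lemma IsBase.exists_symm_exchange (hA : M.IsBase A) (hB : M.IsBase B) (hyB : y ∈ B)
    (hyA : y ∉ A) :
    ∃ e ∈ A \ B, M.IsBase (insert y A \ {e}) ∧ M.IsBase (insert e B \ {y}) := by
  have hC := hA.fundCircuit_isCircuit (hB.subset_ground hyB) hyA
  have hK := fundCocircuit_isCocircuit hyB hB
  obtain ⟨e, ⟨heC, heK⟩, hey⟩ := (hC.isCocircuit_inter_nontrivial hK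
    ⟨y, M.mem_fundCircuit y A, M.mem_fundCocircuit y B⟩).exists_ne y
  have heA : e ∈ A := (M.fundCircuit_subset_insert y A heC).resolve_left hey
  have heB : e ∉ B := fun he ↦ hey ((M.fundCocircuit_inter_eq hyB).subset ⟨heK, he⟩)
  have hyC : y ∈ M.fundCircuit e B := hB.mem_fundCocircuit_iff_mem_fundCircuit.1 heK
  refine ⟨e, ⟨heA, heB⟩, hA.exchange_isBase_of_indep' heA hyA ?_,
    hB.exchange_isBase_of_indep' hyB heB ?_⟩
  · rwa [← hA.indep.mem_fundCircuit_iff (hA.closure_eq ▸ hB.subset_ground hyB) hyA]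
  · rwa [← hB.indep.mem_fundCircuit_iff (hB.closure_eq ▸ hA.subset_ground heA) heB]

lemma IsBase.exists_exchange_finsum_add_eq [M.RankFinite] (w : α → ℝ) (hA : M.IsBase A)
    (hB : M.IsBase B) (hyB : y ∈ B) :
    ∃ A' B', M.IsBase A' ∧ M.IsBase B' ∧ insert y (A ∩ B) ⊆ A' ∧ B \ {y} ⊆ B' ∧
      ∑ᶠ e ∈ A', w e + ∑ᶠ e ∈ B', w e = ∑ᶠ e ∈ A, w e + ∑ᶠ e ∈ B, w e := by
  by_cases hyA : y ∈ A
  · exact ⟨A, B, hA, hB, insert_subset hyA inter_subset_left, sdiff_subset, rfl⟩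
  obtain ⟨e, ⟨heA, heB⟩, hA', hB'⟩ := hA.exists_symm_exchange hB hyB hyA
  refine ⟨_, _, hA', hB', ?_, ?_, ?_⟩
  · rintro z (rfl | ⟨hzA, hzB⟩)
    · exact ⟨mem_insert z A, fun hze ↦ hyA (mem_singleton_iff.1 hze ▸ heA)⟩
    · exact ⟨mem_insert_of_mem y hzA, fun hze ↦ heB (mem_singleton_iff.1 hze ▸ hzB)⟩
  · exact sdiff_subset_sdiff_left (subset_insert e B)
  · have hA'w := finsum_mem_insert_sdiff_singleton_add w hA.finite hyA (mem_insert_of_mem y heA)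
    have hB'w := finsum_mem_insert_sdiff_singleton_add w hB.finite heB (mem_insert_of_mem e hyB)
    linear_combination hA'w + hB'w

/-- `T` completes the independent set `P` to a base of maximum weight; equivalently, `T` is a
maximum-weight base of the contraction `M / P`. -/
def IsMaxWeightCompletion (M : Matroid α) (w : α → ℝ) (P T : Set α) : Prop :=
  Disjoint T P ∧ M.IsBase (P ∪ T) ∧
    ∀ T', Disjoint T' P → M.IsBase (P ∪ T') → ∑ᶠ e ∈ T', w e ≤ ∑ᶠ e ∈ T, w e

namespace IsMaxWeightCompletion

variable [M.RankFinite] {w : α → ℝ} {P T : Set α}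

lemma finsum_eq (hT : M.IsMaxWeightCompletion w P T) :
    ∑ᶠ e ∈ T, w e = ∑ᶠ e ∈ P ∪ T, w e - ∑ᶠ e ∈ P, w e := by
  have hPT := hT.2.1.finite
  rw [finsum_mem_union hT.1.symm (hPT.subset subset_union_left)
    (hPT.subset subset_union_right), add_sub_cancel_left]

lemma sub_le_finsum (hT : M.IsMaxWeightCompletion w P T) {C : Set α} (hC : M.IsBase C)
    (hPC : P ⊆ C) : ∑ᶠ e ∈ C, w e - ∑ᶠ e ∈ P, w e ≤ ∑ᶠ e ∈ T, w e := by
  rw [← finsum_mem_add_sdiff hPC hC.finite, add_sub_cancel_left]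
  exact hT.2.2 (C \ P) disjoint_sdiff_left (by rwa [union_sdiff_cancel hPC])

lemma sub_le_sub {S T₀ Tx Ty Txy : Set α} {x y : α}
    (h₀ : M.IsMaxWeightCompletion w S T₀) (hx : M.IsMaxWeightCompletion w (S ∪ {x}) Tx)
    (hy : M.IsMaxWeightCompletion w (S ∪ {y}) Ty)
    (hxy : M.IsMaxWeightCompletion w (S ∪ {x, y}) Txy) (hne : x ≠ y) (hyS : y ∉ S) :
    ∑ᶠ e ∈ T₀, w e - ∑ᶠ e ∈ Tx, w e ≤ ∑ᶠ e ∈ Ty, w e - ∑ᶠ e ∈ Txy, w e := by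
  have hSx : S ∪ {x} ⊆ S ∪ {x, y} :=
    union_subset_union_right S (singleton_subset_iff.2 (mem_insert x {y}))
  have hSy : S ∪ {y} ⊆ S ∪ {x, y} :=
    union_subset_union_right S (subset_insert x {y})
  obtain ⟨By, Bx, hBy, hBx, hSyBy, hSxBx, hsum⟩ := h₀.2.1.exists_exchange_finsum_add_eq w
    hxy.2.1 (Or.inl (hSy (mem_union_right S rfl)))
  have hx_le := hx.sub_le_finsum hBx <| .trans
    (subset_sdiff_singleton (hSx.trans subset_union_left) fun h ↦ h.elim hyS hne.symm) hSxBx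
  have hy_le := hy.sub_le_finsum hBy <| .trans (by
    rw [union_singleton]
    exact insert_subset_insert (subset_inter subset_union_left
      (subset_union_left.trans subset_union_left))) hSyBy
  have hmod := finsum_mem_union_singleton_add_union_singleton w
    (h₀.2.1.finite.subset subset_union_left) hne
  rw [h₀.finsum_eq, hxy.finsum_eq]
  linarith

end IsMaxWeightCompletion

end Matroid

open Matroid

theorem stmt8_general {α : Type*} (M : Matroid α) [M.Finite] (w' : α → ℝ)
    (R : Set α → Set α)
    (hR : ∀ S, M.Indep S →
      Disjoint (R S) S ∧ M.IsBase (S ∪ R S) ∧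
      ∀ T, Disjoint T S → M.IsBase (S ∪ T) → ∑ᶠ e ∈ T, w' e ≤ ∑ᶠ e ∈ R S, w' e)
    (J : Set α) :
    ∀ S ⊆ J, ∀ x ∈ J \ S, ∀ y ∈ J \ S, x ≠ y → M.Indep (S ∪ {x, y}) →
      (∑ᶠ e ∈ R S, w' e) - (∑ᶠ e ∈ R (S ∪ {x}), w' e) ≤
        (∑ᶠ e ∈ R (S ∪ {y}), w' e) - (∑ᶠ e ∈ R (S ∪ {x, y}), w' e) := by
  intro S _ x _ y ⟨_, hyS⟩ hxy hSxy
  have hS : M.Indep S := hSxy.subset subset_union_left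
  have hSx : M.Indep (S ∪ {x}) :=
    hSxy.subset (union_subset_union_right S (singleton_subset_iff.2 (mem_insert x {y})))
  have hSy : M.Indep (S ∪ {y}) :=
    hSxy.subset (union_subset_union_right S (subset_insert x {y}))
  exact IsMaxWeightCompletion.sub_le_sub (hR S hS) (hR _ hSx) (hR _ hSy) (hR _ hSxy) hxy hyS

/-- Submodularity of `f(S) = w'(R(S))`, where `R(S)` is the maximum-weight basis of the
contraction `M/S` for an independent set `S`: for `S ∪ {x,y}` independent,
`f(S) - f(S ∪ {x}) ≤ f(S ∪ {y}) - f(S ∪ {x,y})`. -/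
theorem stmt8 {α : Type*} (M : Matroid α) [M.Finite] (w' : α → ℝ)
    (hw'nonneg : ∀ e, 0 ≤ w' e) (hw'inj : Function.Injective w')
    (R : Set α → Set α)
    (hR : ∀ S, M.Indep S →
      Disjoint (R S) S ∧ M.IsBase (S ∪ R S) ∧
      ∀ T, Disjoint T S → M.IsBase (S ∪ T) → ∑ᶠ e ∈ T, w' e ≤ ∑ᶠ e ∈ R S, w' e)
    (J : Set α) (hJ : M.Indep J) :
    ∀ S ⊆ J, ∀ x ∈ J \ S, ∀ y ∈ J \ S, x ≠ y → M.Indep (S ∪ {x, y}) →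
      (∑ᶠ e ∈ R S, w' e) - (∑ᶠ e ∈ R (S ∪ {x}), w' e) ≤
        (∑ᶠ e ∈ R (S ∪ {y}), w' e) - (∑ᶠ e ∈ R (S ∪ {x, y}), w' e) :=
  stmt8_general M w' R hR J
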